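/- arXiv:2311.12765 — 4 statements merged into one kernel-verified Lean document; each statement's English description precedes it below -/
import Mathlib

section
/- If A is a good independent set in a 3-uniform hypergraph F and A' is a subset of A, then A' is also good. Here A ⊆ V(F) is 'good' if A is independent and for every set U with A ⊊ U ⊆ V(F), the deficiency Δ(U) := |U| - e(F[U]) satisfies Δ(U) ≥ |A| + 1. -/
/-!
Independence passes to subsets. For the deficiency bound, take `A' ⊊ U`. If `U ⊆ A`, then `U`
spans no edge and `Δ(U) = |U| > |A'|`. Otherwise `U ∪ A ⊋ A`, so `Δ(U ∪ A) ≥ |A| + 1`; adding the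
at most `|A| - |A'|` vertices of `A \ U` to `U` raises the deficiency by at most that many, whence
`Δ(U) ≥ |A'| + 1`.
-/

/-- A 3-uniform hypergraph on vertex type `V`: a finite set of edges, each of size 3. -/
structure Hypergraph3 (V : Type*) where
  edges : Finset (Finset V)
  card3 : ∀ e ∈ edges, e.card = 3

variable {V : Type*} [DecidableEq V]

/-- The edges of `F` contained in the vertex set `U`. -/
def edgesIn (F : Hypergraph3 V) (U : Finset V) : Finset (Finset V) :=
  F.edges.filter (fun e => e ⊆ U)

/-- The deficiency `Δ(U) = |U| - e(F[U])`. -/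
def defic (F : Hypergraph3 V) (U : Finset V) : ℤ :=
  (U.card : ℤ) - ((edgesIn F U).card : ℤ)

/-- `A` is independent in `F` if no edge of `F` is contained in `A`. -/
def Indep (F : Hypergraph3 V) (A : Finset V) : Prop :=
  ∀ e ∈ F.edges, ¬ e ⊆ A

/-- `A` is good: independent, and every strict superset `U` has `Δ(U) ≥ |A| + 1`. -/
def Good (F : Hypergraph3 V) (A : Finset V) : Prop :=
  Indep F A ∧ ∀ U : Finset V, A ⊂ U → (A.card : ℤ) + 1 ≤ defic F U

open Finset

lemma edgesIn_mono (F : Hypergraph3 V) {U W : Finset V} (h : U ⊆ W) :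
    edgesIn F U ⊆ edgesIn F W :=
  monotone_filter_right F.edges fun _ _ heU => heU.trans h

lemma defic_union_le (F : Hypergraph3 V) (U S : Finset V) :
    defic F (U ∪ S) ≤ defic F U + #(S \ U) := by
  have hcard : #(S \ U) + #U = #(U ∪ S) := by rw [union_comm]; exact card_sdiff_add_card S U
  have hedges : #(edgesIn F U) ≤ #(edgesIn F (U ∪ S)) :=
    card_le_card (edgesIn_mono F subset_union_left)
  simp only [defic]
  omega

lemma Indep.mono {α : Type*} {F : Hypergraph3 α} {A A' : Finset α} (hA : Indep F A)
    (h : A' ⊆ A) : Indep F A' :=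
  fun e he heA' => hA e he (heA'.trans h)

namespace Indep

variable {F : Hypergraph3 V} {A : Finset V}

lemma edgesIn_eq_empty (hA : Indep F A) : edgesIn F A = ∅ :=
  filter_eq_empty_iff.2 fun e he => hA e he

lemma defic_eq_card (hA : Indep F A) : defic F A = #A := by
  simp [defic, hA.edgesIn_eq_empty]

end Indep

/-- a subset of a good set is good. -/
theorem subset_of_good_is_good (F : Hypergraph3 V) (A A' : Finset V)
    (hA : Good F A) (hsub : A' ⊆ A) : Good F A' := by
  obtain ⟨hind, hgood⟩ := hA
  refine ⟨hind.mono hsub, fun U hU => ?_⟩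
  by_cases hUA : U ⊆ A
  · rw [(hind.mono hUA).defic_eq_card]
    exact_mod_cast card_lt_card hU
  · have hbig : (#A : ℤ) + 1 ≤ defic F (U ∪ A) :=
      hgood _ (ssubset_of_subset_not_subset subset_union_right
        fun h => hUA (subset_union_left.trans h))
    have hmissing : #(A \ U) ≤ #A - #A' := by
      rw [← card_sdiff_of_subset hsub]
      exact card_le_card (sdiff_subset_sdiff subset_rfl hU.subset)
    have hA'A : #A' ≤ #A := card_le_card hsub
    have hunion := defic_union_le F U A
    omega
end

section
/- Let F be an eligible 3-uniform hypergraph with Δ(F) = k, and let F' be obtained by gluing two disjoint copies of F along the good set A of size k−1. Then F' is eligible with Δ(F') = k+1 and e(F') = 2e(F). -/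
variable {V : Type*} [DecidableEq V]

variable [Fintype V]

/-- The map identifying the first copy `V` inside `V ⊕ {x // x ∉ A}` along `A`. -/
def glueMap (A : Finset V) : V → V ⊕ {x : V // x ∉ A} :=
  fun v => if h : v ∈ A then Sum.inl v else Sum.inr ⟨v, h⟩

lemma glueMap_injective (A : Finset V) : Function.Injective (glueMap A) := by
  intro a b h
  have ha := congrArg (Sum.elim (id : V → V) Subtype.val) h
  simp only [glueMap] at ha
  split_ifs at ha <;> simpa using ha

/-- The hypergraph obtained from two vertex-disjoint copies of `F` by identifying the
two copies of `A` pointwise. -/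
def glue (F : Hypergraph3 V) (A : Finset V) : Hypergraph3 (V ⊕ {x : V // x ∉ A}) where
  edges := F.edges.image (Finset.image Sum.inl) ∪ F.edges.image (Finset.image (glueMap A))
  card3 := by
    intro e he
    simp only [Finset.mem_union, Finset.mem_image] at he
    rcases he with ⟨f, hf, rfl⟩ | ⟨f, hf, rfl⟩
    · rw [Finset.card_image_of_injective _ Sum.inl_injective]; exact F.card3 f hf
    · rw [Finset.card_image_of_injective _ (glueMap_injective A)]; exact F.card3 f hf

/-- The degree of a vertex: the number of edges containing it. -/
def deg (F : Hypergraph3 V) (x : V) : ℕ :=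
  (F.edges.filter (fun e => x ∈ e)).card

/-- `F` is eligible with data `A, B, u, v` and deficiency `k`:
(i) `A, B` are disjoint good sets of size `k - 1`;
(ii) `u ≠ v` are vertices outside `A ∪ B`;
(iii) at most `e(F)/4 - k` vertices have degree `> 1`, every edge contains at most one
vertex of degree `1`, and there are no isolated vertices;
(iv) every `U` with `|U| ≥ 2` has `Δ(U) ≥ 2`. -/
def EligibleWith (F : Hypergraph3 V) (A B : Finset V) (u v : V) (k : ℕ) : Prop :=
  1 ≤ k ∧ defic F Finset.univ = (k : ℤ) ∧
  Good F A ∧ Good F B ∧ Disjoint A B ∧ A.card = k - 1 ∧ B.card = k - 1 ∧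
  u ≠ v ∧ u ∉ A ∪ B ∧ v ∉ A ∪ B ∧
  (((Finset.univ.filter (fun x => 1 < deg F x)).card : ℚ) ≤ (F.edges.card : ℚ) / 4 - k) ∧
  (∀ e ∈ F.edges, (e.filter (fun x => deg F x = 1)).card ≤ 1) ∧
  (∀ x : V, 1 ≤ deg F x) ∧
  (∀ U : Finset V, 2 ≤ U.card → 2 ≤ defic F U)

/-- `F` is eligible. -/
def Eligible (F : Hypergraph3 V) : Prop :=
  ∃ A B u v k, EligibleWith F A B u v k

/-!
A vertex set `U` of the glued hypergraph has traces `P` and `Q` on the two copies of `F`, which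
agree on `A`. Since `A` is independent no edge lies in both copies, so
`Δ(U) = Δ(P) + Δ(Q) - |P ∩ A|`. Goodness of `A` gives `Δ(P) ≥ |P ∩ A| + 1` as soon as `P ⊄ A`,
and together with (iv) for `F` this yields (iv) for the glued hypergraph. The new good sets are
`B` in the first copy plus `u` in the second, and `u` in the first copy plus `B` in the second;
the new special vertices are the two copies of `v`. Degrees change only on `A`, where they double,
which bounds the number of vertices of degree more than one.
-/

open Finset

section Deficiency

variable {F : Hypergraph3 V} {A U : Finset V}

omit [Fintype V] in
lemma defic_eq_card_of_subset (hA : Indep F A) (hU : U ⊆ A) : defic F U = #U := by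
  have : edgesIn F U = ∅ := filter_eq_empty_iff.2 fun e he hsub => hA e he (hsub.trans hU)
  simp [defic, this]

omit [Fintype V] in
lemma card_edgesIn_mono {W : Finset V} (h : U ⊆ W) : #(edgesIn F U) ≤ #(edgesIn F W) :=
  card_le_card fun e he => by
    rw [edgesIn, mem_filter] at he ⊢
    exact ⟨he.1, he.2.trans h⟩

omit [DecidableEq V] [Fintype V] in
lemma indep_singleton (F : Hypergraph3 V) (w : V) : Indep F {w} := fun e he hsub => by
  have := card_le_card hsub
  rw [F.card3 e he, card_singleton] at this
  omega

omit [Fintype V] in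
/-- Goodness of `A` applied to `U ∪ A`, whose deficiency is at most `Δ(U) + |A| - |U ∩ A|`. -/
lemma Good.card_inter_add_one_le_defic (hA : Good F A) (hU : ¬ U ⊆ A) :
    (#(U ∩ A) : ℤ) + 1 ≤ defic F U := by
  have hgood := hA.2 (U ∪ A) (Finset.ssubset_iff_subset_ne.2
    ⟨subset_union_right, fun h => hU (h ▸ subset_union_left)⟩)
  have hcard := card_union_add_card_inter U A
  have hedges := card_edgesIn_mono (F := F) (subset_union_left (s₂ := A) (s₁ := U))
  unfold defic at hgood ⊢
  omega

variable (hiv : ∀ U : Finset V, 2 ≤ #U → 2 ≤ defic F U) {P Q : Finset V}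
include hiv

omit [Fintype V] in
lemma two_le_defic_add_defic_of_subset (hA : Indep F A) (hP : P ⊆ A)
    (hcard : 2 ≤ (#P : ℤ) + #Q - #(P ∩ A)) : 2 ≤ defic F P + defic F Q - #(P ∩ A) := by
  rw [inter_eq_left.2 hP] at hcard ⊢
  have := hiv Q (by omega)
  rw [defic_eq_card_of_subset hA hP]
  omega

omit [Fintype V] in
/-- `P` and `Q` stand for the traces, on the two copies, of a proper superset of the set made of
`X` in one copy and `w` in the other. -/
lemma card_add_two_le_defic_add_defic (hA : Good F A) {X : Finset V} (hX : Good F X)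
    (hXA : Disjoint X A) {w : V} (hw : w ∉ A) (hPQ : P ∩ A = Q ∩ A) (hXP : X ⊆ P) (hwQ : w ∈ Q)
    (hcard : (#X : ℤ) + 1 < #P + #Q - #(P ∩ A)) :
    (#X : ℤ) + 2 ≤ defic F P + defic F Q - #(P ∩ A) := by
  rcases hXP.eq_or_ssubset with rfl | hXP
  · rw [disjoint_iff_inter_eq_empty.1 hXA, card_empty] at hcard ⊢
    have := hiv Q (by omega)
    rw [defic_eq_card_of_subset hX.1 subset_rfl]
    omega
  · have := hX.2 P hXP
    have := hA.card_inter_add_one_le_defic fun h => hw (h hwQ)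
    rw [hPQ]
    omega

end Deficiency

section Traces

variable {A : Finset V}

/-- In `glue F A` the first copy of `V` is embedded by `Sum.inl` and the second by `glueMap A`;
`glueFst A U` and `glueSnd A U` are the traces of `U` on the two copies. -/
def glueFst (A : Finset V) (U : Finset (V ⊕ {x : V // x ∉ A})) : Finset V :=
  univ.filter fun x => Sum.inl x ∈ U

def glueSnd (A : Finset V) (U : Finset (V ⊕ {x : V // x ∉ A})) : Finset V :=
  univ.filter fun x => glueMap A x ∈ U

def glueSet (A X Y : Finset V) : Finset (V ⊕ {x : V // x ∉ A}) :=
  X.image Sum.inl ∪ Y.image (glueMap A)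

@[simp]
lemma mem_glueFst {U : Finset (V ⊕ {x : V // x ∉ A})} {x : V} :
    x ∈ glueFst A U ↔ Sum.inl x ∈ U := by
  simp [glueFst]

@[simp]
lemma mem_glueSnd {U : Finset (V ⊕ {x : V // x ∉ A})} {x : V} :
    x ∈ glueSnd A U ↔ glueMap A x ∈ U := by
  simp [glueSnd]

omit [Fintype V] in
lemma glueMap_of_mem {x : V} (hx : x ∈ A) : glueMap A x = Sum.inl x := dif_pos hx

omit [Fintype V] in
lemma glueMap_of_notMem {x : V} (hx : x ∉ A) : glueMap A x = Sum.inr ⟨x, hx⟩ := dif_neg hx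

omit [Fintype V] in
@[simp]
lemma glueMap_eq_inl_iff {x y : V} : glueMap A y = Sum.inl x ↔ y = x ∧ x ∈ A := by
  by_cases hy : y ∈ A
  · rw [glueMap_of_mem hy]
    aesop
  · rw [glueMap_of_notMem hy]
    aesop

omit [Fintype V] in
@[simp]
lemma glueMap_eq_inr_iff {y : V} {z : {x : V // x ∉ A}} : glueMap A y = Sum.inr z ↔ y = z := by
  by_cases hy : y ∈ A
  · rw [glueMap_of_mem hy]
    simp only [reduceCtorEq, false_iff]
    exact fun h => z.2 (h ▸ hy)
  · rw [glueMap_of_notMem hy, Sum.inr.injEq, Subtype.ext_iff]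

lemma glueFst_inter (U : Finset (V ⊕ {x : V // x ∉ A})) : glueFst A U ∩ A = glueSnd A U ∩ A := by
  ext x
  by_cases hx : x ∈ A <;> simp [hx, glueMap_of_mem]

@[simp]
lemma glueFst_univ : glueFst A univ = univ := by ext; simp

@[simp]
lemma glueSnd_univ : glueSnd A univ = univ := by ext; simp

lemma glueFst_mono {U U' : Finset (V ⊕ {x : V // x ∉ A})} (h : U ⊆ U') :
    glueFst A U ⊆ glueFst A U' := fun _ hx => mem_glueFst.2 (h (mem_glueFst.1 hx))

lemma glueSnd_mono {U U' : Finset (V ⊕ {x : V // x ∉ A})} (h : U ⊆ U') :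
    glueSnd A U ⊆ glueSnd A U' := fun _ hx => mem_glueSnd.2 (h (mem_glueSnd.1 hx))

lemma card_eq_glueFst_add_glueSnd (U : Finset (V ⊕ {x : V // x ∉ A})) :
    (#U : ℤ) = #(glueFst A U) + #(glueSnd A U) - #(glueFst A U ∩ A) := by
  have hleft : U.toLeft = glueFst A U := by ext; simp
  have hright : U.toRight.map (Function.Embedding.subtype _) = glueSnd A U \ A := by
    ext x
    by_cases hx : x ∈ A <;> simp [hx, glueMap_of_notMem]
  have hsplit := card_toLeft_add_card_toRight (u := U)
  have hsnd := card_inter_add_card_sdiff (glueSnd A U) A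
  rw [← card_map (Function.Embedding.subtype _), hright, hleft] at hsplit
  rw [glueFst_inter]
  omega

lemma disjoint_of_glueFst_of_glueSnd {U U' : Finset (V ⊕ {x : V // x ∉ A})}
    (h₁ : Disjoint (glueFst A U) (glueFst A U')) (h₂ : Disjoint (glueSnd A U) (glueSnd A U')) :
    Disjoint U U' := by
  rw [disjoint_left]
  rintro (x | ⟨y, hy⟩) hU hU'
  · exact disjoint_left.1 h₁ (mem_glueFst.2 hU) (mem_glueFst.2 hU')
  · rw [← glueMap_of_notMem hy] at hU hU'
    exact disjoint_left.1 h₂ (mem_glueSnd.2 hU) (mem_glueSnd.2 hU')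

lemma glueFst_glueSet {X Y : Finset V} (hY : Disjoint Y A) : glueFst A (glueSet A X Y) = X := by
  ext x
  simp only [glueSet, mem_glueFst, mem_union, mem_image, glueMap_eq_inl_iff, Sum.inl.injEq]
  constructor
  · rintro (⟨_, hx, rfl⟩ | ⟨_, hx, rfl, hxA⟩)
    exacts [hx, absurd hxA (disjoint_left.1 hY hx)]
  · exact fun hx => Or.inl ⟨x, hx, rfl⟩

lemma glueSnd_glueSet {X Y : Finset V} (hX : Disjoint X A) : glueSnd A (glueSet A X Y) = Y := by
  ext x
  simp only [glueSet, mem_glueSnd, mem_union, mem_image, (glueMap_injective A).eq_iff]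
  constructor
  · rintro (⟨y, hy, hyx⟩ | ⟨_, hx, rfl⟩)
    · rw [eq_comm, glueMap_eq_inl_iff] at hyx
      exact absurd (hyx.1 ▸ hyx.2) (disjoint_left.1 hX hy)
    · exact hx
  · exact fun hx => Or.inr ⟨x, hx, rfl⟩

lemma card_glueSet {X Y : Finset V} (hX : Disjoint X A) (hY : Disjoint Y A) :
    #(glueSet A X Y) = #X + #Y := by
  have := card_eq_glueFst_add_glueSnd (glueSet A X Y)
  rw [glueFst_glueSet hY, glueSnd_glueSet hX, disjoint_iff_inter_eq_empty.1 hX, card_empty] at this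
  omega

end Traces

section Glue

variable {F : Hypergraph3 V} {A : Finset V}

omit [Fintype V] in
lemma disjoint_glue_edges (hA : Indep F A) :
    Disjoint (F.edges.image (image Sum.inl)) (F.edges.image (image (glueMap A))) := by
  rw [disjoint_left]
  intro e he hge
  obtain ⟨f, -, rfl⟩ := mem_image.1 he
  obtain ⟨g, hg, hgf⟩ := mem_image.1 hge
  obtain ⟨z, hz, hzA⟩ := not_subset.1 (hA g hg)
  have : glueMap A z ∈ f.image Sum.inl := hgf ▸ mem_image_of_mem _ hz
  simp [glueMap_of_notMem hzA] at this

lemma card_filter_glue_edges (hA : Indep F A)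
    (p : Finset (V ⊕ {x : V // x ∉ A}) → Prop) [DecidablePred p] :
    #((glue F A).edges.filter p) =
      #(F.edges.filter fun f => p (f.image Sum.inl)) +
        #(F.edges.filter fun f => p (f.image (glueMap A))) := by
  rw [glue, filter_union, card_union_of_disjoint (disjoint_filter_filter (disjoint_glue_edges hA)),
    filter_image, filter_image, card_image_of_injective _ (image_injective Sum.inl_injective),
    card_image_of_injective _ (image_injective (glueMap_injective A))]

lemma card_glue_edges (hA : Indep F A) : #(glue F A).edges = 2 * #F.edges := by
  simpa [two_mul] using card_filter_glue_edges hA fun _ => True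

lemma image_inl_subset_iff {f : Finset V} {U : Finset (V ⊕ {x : V // x ∉ A})} :
    f.image Sum.inl ⊆ U ↔ f ⊆ glueFst A U := by
  simp [subset_iff]

lemma image_glueMap_subset_iff {f : Finset V} {U : Finset (V ⊕ {x : V // x ∉ A})} :
    f.image (glueMap A) ⊆ U ↔ f ⊆ glueSnd A U := by
  simp [subset_iff]

lemma defic_glue (hA : Indep F A) (U : Finset (V ⊕ {x : V // x ∉ A})) :
    defic (glue F A) U = defic F (glueFst A U) + defic F (glueSnd A U) - #(glueFst A U ∩ A) := by
  rw [defic, edgesIn, card_filter_glue_edges hA]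
  simp only [image_inl_subset_iff, image_glueMap_subset_iff]
  rw [card_eq_glueFst_add_glueSnd U, defic, defic, edgesIn, edgesIn]
  push_cast
  ring

lemma indep_glue_iff {U : Finset (V ⊕ {x : V // x ∉ A})} :
    Indep (glue F A) U ↔ Indep F (glueFst A U) ∧ Indep F (glueSnd A U) := by
  simp only [Indep, glue, mem_union, or_imp, forall_and, forall_mem_image, image_inl_subset_iff,
    image_glueMap_subset_iff]

end Glue

section Degree

variable {F : Hypergraph3 V}

omit [Fintype V] in
lemma deg_le_deg_of_image_subset {W : Type*} [DecidableEq W] {G : Hypergraph3 W} {g : V → W}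
    (hg : Function.Injective g) (hFG : F.edges.image (image g) ⊆ G.edges) (x : V) :
    deg F x ≤ deg G (g x) := calc
  deg F x = #((F.edges.image (image g)).filter fun e => g x ∈ e) := by
    rw [deg, filter_image, card_image_of_injective _ (image_injective hg)]
    simp only [hg.mem_finset_image]
  _ ≤ deg G (g x) := card_le_card (filter_subset_filter _ hFG)

omit [Fintype V] in
lemma card_filter_deg_eq_one_image_le {W : Type*} [DecidableEq W] {G : Hypergraph3 W} {g : V → W}
    (hdeg : ∀ x, deg F x ≤ deg G (g x)) (hpos : ∀ x, 1 ≤ deg F x) (f : Finset V) :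
    #((f.image g).filter fun w => deg G w = 1) ≤ #(f.filter fun x => deg F x = 1) := by
  rw [filter_image]
  refine card_image_le.trans (card_le_card (monotone_filter_right _ fun x hx => ?_))
  have := hdeg x
  have := hpos x
  omega

variable {A : Finset V}

lemma deg_le_deg_glue_inl (x : V) : deg F x ≤ deg (glue F A) (Sum.inl x) :=
  deg_le_deg_of_image_subset Sum.inl_injective subset_union_left x

lemma deg_le_deg_glue_glueMap (x : V) : deg F x ≤ deg (glue F A) (glueMap A x) :=
  deg_le_deg_of_image_subset (glueMap_injective A) subset_union_right x

lemma deg_glue_inl_of_notMem (hA : Indep F A) {x : V} (hx : x ∉ A) :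
    deg (glue F A) (Sum.inl x) = deg F x := by
  simp [deg, card_filter_glue_edges hA, hx]

lemma deg_glue_glueMap_of_notMem (hA : Indep F A) {x : V} (hx : x ∉ A) :
    deg (glue F A) (glueMap A x) = deg F x := by
  simp [deg, card_filter_glue_edges hA, glueMap_of_notMem hx]

lemma one_le_deg_glue (hpos : ∀ x, 1 ≤ deg F x) :
    ∀ w : V ⊕ {x : V // x ∉ A}, 1 ≤ deg (glue F A) w
  | .inl x => (hpos x).trans (deg_le_deg_glue_inl x)
  | .inr ⟨y, hy⟩ => glueMap_of_notMem hy ▸ (hpos y).trans (deg_le_deg_glue_glueMap y)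

lemma card_filter_deg_glue_eq_one_le (hpos : ∀ x, 1 ≤ deg F x)
    (hF : ∀ e ∈ F.edges, #(e.filter fun x => deg F x = 1) ≤ 1) :
    ∀ e ∈ (glue F A).edges, #(e.filter fun w => deg (glue F A) w = 1) ≤ 1 := by
  simp only [glue, mem_union, or_imp, forall_and, forall_mem_image]
  exact ⟨fun f hf => (card_filter_deg_eq_one_image_le deg_le_deg_glue_inl hpos f).trans (hF f hf),
    fun f hf => (card_filter_deg_eq_one_image_le deg_le_deg_glue_glueMap hpos f).trans (hF f hf)⟩

lemma card_filter_one_lt_deg_glue_le (hA : Indep F A) :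
    #(univ.filter fun w => 1 < deg (glue F A) w) ≤
      #A + 2 * #(univ.filter fun x => 1 < deg F x) := by
  set D := univ.filter fun x => 1 < deg F x
  have hsub : (univ.filter fun w => 1 < deg (glue F A) w) ⊆
      (A ∪ D).image Sum.inl ∪ D.image (glueMap A) := by
    rintro (x | ⟨y, hy⟩) hw
    · by_cases hx : x ∈ A
      · simp [hx]
      · simp_all [deg_glue_inl_of_notMem hA hx, D]
    · rw [← glueMap_of_notMem hy] at hw ⊢
      simp_all [deg_glue_glueMap_of_notMem hA hy, D, (glueMap_injective A).mem_finset_image]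
  calc _ ≤ #((A ∪ D).image Sum.inl) + #(D.image (glueMap A)) :=
        (card_le_card hsub).trans (card_union_le _ _)
    _ ≤ #(A ∪ D) + #D := add_le_add card_image_le card_image_le
    _ ≤ #A + 2 * #D := by linarith [card_union_le A D]

end Degree

section Eligible

variable {F : Hypergraph3 V} {A : Finset V} (hA : Good F A)
  (hiv : ∀ U : Finset V, 2 ≤ #U → 2 ≤ defic F U)
include hA hiv

lemma two_le_defic_glue {U : Finset (V ⊕ {x : V // x ∉ A})} (hU : 2 ≤ #U) :
    2 ≤ defic (glue F A) U := by
  have hcard := card_eq_glueFst_add_glueSnd U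
  have hinter := congrArg card (glueFst_inter U)
  rw [defic_glue hA.1]
  by_cases hfst : glueFst A U ⊆ A
  · exact two_le_defic_add_defic_of_subset hiv hA.1 hfst (by omega)
  by_cases hsnd : glueSnd A U ⊆ A
  · have := two_le_defic_add_defic_of_subset hiv hA.1 hsnd (Q := glueFst A U) (by omega)
    omega
  have := hA.card_inter_add_one_le_defic hfst
  have := hA.card_inter_add_one_le_defic hsnd
  omega

lemma good_glue {X : Finset V} (hX : Good F X) (hXA : Disjoint X A) {w : V} (hw : w ∉ A)
    {S : Finset (V ⊕ {x : V // x ∉ A})}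
    (hS : glueFst A S = X ∧ glueSnd A S = {w} ∨ glueFst A S = {w} ∧ glueSnd A S = X) :
    Good (glue F A) S := by
  have hXA' := disjoint_iff_inter_eq_empty.1 hXA
  have hwA : {w} ∩ A = ∅ := disjoint_iff_inter_eq_empty.1 (disjoint_singleton_left.2 hw)
  have hcardS : (#S : ℤ) = #X + 1 := by
    rw [card_eq_glueFst_add_glueSnd]
    rcases hS with ⟨h₁, h₂⟩ | ⟨h₁, h₂⟩ <;> simp [h₁, h₂, hXA', hwA, add_comm]
  refine ⟨indep_glue_iff.2 ?_, fun U hSU => ?_⟩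
  · rcases hS with ⟨h₁, h₂⟩ | ⟨h₁, h₂⟩ <;> rw [h₁, h₂]
    exacts [⟨hX.1, indep_singleton F w⟩, ⟨indep_singleton F w, hX.1⟩]
  have hlt : (#S : ℤ) < #U := by exact_mod_cast card_lt_card hSU
  have hfst := glueFst_mono (A := A) hSU.subset
  have hsnd := glueSnd_mono (A := A) hSU.subset
  have hinter := glueFst_inter U
  rw [card_eq_glueFst_add_glueSnd U, hcardS] at hlt
  rw [defic_glue hA.1, hcardS]
  rcases hS with ⟨h₁, h₂⟩ | ⟨h₁, h₂⟩
  · rw [h₁] at hfst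
    rw [h₂, singleton_subset_iff] at hsnd
    linarith [card_add_two_le_defic_add_defic hiv hA hX hXA hw hinter hfst hsnd (by omega)]
  · rw [h₁, singleton_subset_iff] at hfst
    rw [h₂] at hsnd
    have := card_add_two_le_defic_add_defic hiv hA hX hXA hw hinter.symm hsnd hfst
      (by rw [← hinter]; omega)
    rw [← hinter] at this
    omega

end Eligible

lemma eligibleWith_glue {F : Hypergraph3 V} {A B : Finset V} {u v : V} {k : ℕ}
    (h : EligibleWith F A B u v k) :
    EligibleWith (glue F A) (glueSet A B {u}) (glueSet A {u} B) (Sum.inl v) (glueMap A v)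
      (k + 1) := by
  obtain ⟨hk, hdef, hA, hB, hAB, hAcard, hBcard, huv, huAB, hvAB, hhigh, hedge, hpos, hiv⟩ := h
  simp only [mem_union, not_or] at huAB hvAB
  have hBA := hAB.symm
  have huA : Disjoint {u} A := disjoint_singleton_left.2 huAB.1
  have hA'fst := glueFst_glueSet (X := B) huA
  have hA'snd := glueSnd_glueSet (Y := {u}) hBA
  have hB'fst := glueFst_glueSet (X := {u}) hBA
  have hB'snd := glueSnd_glueSet (Y := B) huA
  have hA'card : #(glueSet A B {u}) = k := by
    rw [card_glueSet hBA huA, hBcard, card_singleton]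
    omega
  have hB'card : #(glueSet A {u} B) = k := by
    rw [card_glueSet huA hBA, hBcard, card_singleton]
    omega
  refine ⟨by omega, ?_, good_glue hA hiv hB hBA huAB.1 (.inl ⟨hA'fst, hA'snd⟩),
    good_glue hA hiv hB hBA huAB.1 (.inr ⟨hB'fst, hB'snd⟩),
    disjoint_of_glueFst_of_glueSnd (by simpa [hA'fst, hB'fst] using huAB.2)
      (by simpa [hA'snd, hB'snd] using huAB.2),
    by omega, by omega, by simp [glueMap_of_notMem hvAB.1], ?_, ?_, ?_,
    card_filter_deg_glue_eq_one_le hpos hedge, one_le_deg_glue hpos,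
    fun U => two_le_defic_glue hA hiv⟩
  · rw [defic_glue hA.1, glueFst_univ, glueSnd_univ, univ_inter, hdef]
    omega
  · rw [mem_union, ← mem_glueFst, ← mem_glueFst, hA'fst, hB'fst]
    simp [hvAB.2, huv.symm]
  · rw [mem_union, ← mem_glueSnd, ← mem_glueSnd, hA'snd, hB'snd]
    simp [hvAB.2, huv.symm]
  · have hle : (#(univ.filter fun w => 1 < deg (glue F A) w) : ℚ) ≤
        #A + 2 * #(univ.filter fun x => 1 < deg F x) := by
      exact_mod_cast card_filter_one_lt_deg_glue_le hA.1
    have hAq : (#A : ℚ) = k - 1 := by rw [hAcard, Nat.cast_sub hk, Nat.cast_one]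
    rw [card_glue_edges hA.1]
    push_cast
    linarith

/-- gluing two disjoint copies of an eligible hypergraph `F` with `Δ(F) = k`
along its good set `A` of size `k - 1` yields an eligible hypergraph `F'` with
`Δ(F') = k + 1` and `e(F') = 2e(F)`. -/
theorem glue_eligible (F : Hypergraph3 V) (A B : Finset V) (u v : V) (k : ℕ)
    (h : EligibleWith F A B u v k) :
    Eligible (glue F A) ∧ defic (glue F A) Finset.univ = (k : ℤ) + 1 ∧
    (glue F A).edges.card = 2 * F.edges.card := by
  have hglue := eligibleWith_glue h
  obtain ⟨-, -, hA, -⟩ := h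
  exact ⟨⟨_, _, _, _, _, hglue⟩, by exact_mod_cast hglue.2.1, card_glue_edges hA.1⟩
end

section
/- Let F be an eligible 3-uniform hypergraph and let e ≥ 2·e(F). If a 3-uniform hypergraph H contains an (r, F)-sunflower (for some r) with at least e edges, then H contains a set of at most e + Δ(F) vertices spanning at least e edges. -/
variable {V : Type*} [DecidableEq V]

variable [Fintype V]

open Finset

lemma card_le_card_filter_disjoint_add {α : Type*} [DecidableEq α] {E : Finset (Finset α)}
    {X : Finset α} (hX : ∀ x ∈ X, #(E.filter (x ∈ ·)) ≤ 1) :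
    #E ≤ #(E.filter (Disjoint · X)) + #X := by
  rw [← card_filter_add_card_filter_not (s := E) (Disjoint · X)]
  gcongr
  calc #(E.filter fun ed => ¬Disjoint ed X)
      ≤ #(X.biUnion fun x => E.filter (x ∈ ·)) := card_le_card fun ed hed => by
        obtain ⟨hed, hmeet⟩ := mem_filter.1 hed
        obtain ⟨x, hxed, hxX⟩ := not_disjoint_iff.1 hmeet
        exact mem_biUnion.2 ⟨x, hxX, mem_filter.2 ⟨hed, hxed⟩⟩
    _ ≤ ∑ x ∈ X, #(E.filter (x ∈ ·)) := card_biUnion_le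
    _ ≤ #X := by simpa using sum_le_card_nsmul X _ 1 hX

lemma exists_le_add_mul_lt_add {a m e r : ℕ} (hlt : a + m < e) (hle : e ≤ a + r * m) :
    ∃ t, 2 ≤ t ∧ t ≤ r ∧ e ≤ a + t * m ∧ a + t * m < e + m := by
  have hex : ∃ t, e ≤ a + t * m := ⟨r, hle⟩
  have htwo : 2 ≤ Nat.find hex := (Nat.le_find_iff hex 2).2 fun t ht => by
    interval_cases t <;> omega
  obtain ⟨t, ht⟩ := Nat.exists_eq_add_one_of_ne_zero (by omega : Nat.find hex ≠ 0)
  have hmin : ¬e ≤ a + t * m := Nat.find_min hex (by omega)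
  refine ⟨Nat.find hex, htwo, Nat.find_min' hex hle, Nat.find_spec hex, ?_⟩
  rw [ht, add_one_mul]
  omega

namespace Hypergraph3

variable {F : Hypergraph3 V}

def leaves (F : Hypergraph3 V) : Finset V := univ.filter fun x => deg F x = 1

def hubs (F : Hypergraph3 V) : Finset V := univ.filter fun x => 1 < deg F x

def coreLeaves (F : Hypergraph3 V) (U : Finset V) : Finset V :=
  F.leaves.filter fun x => ∀ ed ∈ F.edges, x ∈ ed → ed ⊆ U

omit [Fintype V] in
lemma mem_edgesIn {U ed : Finset V} : ed ∈ edgesIn F U ↔ ed ∈ F.edges ∧ ed ⊆ U :=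
  mem_filter

omit [Fintype V] in
lemma card_edgesIn_add_card_sdiff (U : Finset V) :
    #(edgesIn F U) + #(F.edges \ edgesIn F U) = #F.edges := by
  rw [add_comm]
  exact card_sdiff_add_card_eq_card (filter_subset _ _)

omit [Fintype V] in
lemma deg_pos_iff {x : V} : 0 < deg F x ↔ ∃ ed ∈ F.edges, x ∈ ed := by
  simp [deg, card_pos, filter_nonempty_iff]

omit [Fintype V] in
lemma eq_of_deg_eq_one {x : V} {b c : Finset V} (hx : deg F x = 1) (hb : b ∈ F.edges)
    (hc : c ∈ F.edges) (hxb : x ∈ b) (hxc : x ∈ c) : b = c :=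
  card_le_one.1 hx.le b (mem_filter.2 ⟨hb, hxb⟩) c (mem_filter.2 ⟨hc, hxc⟩)

lemma card_eq_card_edges_add_defic : (Fintype.card V : ℤ) = #F.edges + defic F univ := by
  simp [defic, edgesIn]

lemma sdiff_edgesIn_nonempty (hdeg : ∀ x, 1 ≤ deg F x) {U : Finset V} (hU : U ⊂ univ) :
    (F.edges \ edgesIn F U).Nonempty := by
  obtain ⟨x, -, hxU⟩ := exists_of_ssubset hU
  obtain ⟨ed, hed, hxed⟩ := deg_pos_iff.1 (hdeg x)
  exact ⟨ed, mem_sdiff.2 ⟨hed, fun h => hxU ((mem_edgesIn.1 h).2 hxed)⟩⟩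

lemma card_leaves_add_card_hubs (hdeg : ∀ x, 1 ≤ deg F x) :
    #F.leaves + #F.hubs = Fintype.card V := by
  rw [leaves, ← card_univ, ← card_filter_add_card_filter_not (s := univ) (deg F · = 1), hubs]
  congr 2
  exact filter_congr fun x _ => by have := hdeg x; exact ⟨fun h => by omega, fun h => by omega⟩

lemma card_univ_sdiff_le (hdeg : ∀ x, 1 ≤ deg F x) (U : Finset V) :
    #(univ \ U) ≤ #(F.leaves \ U) + #F.hubs :=
  calc #(univ \ U) ≤ #((F.leaves \ U) ∪ F.hubs) := card_le_card fun x hx => by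
        simp only [leaves, hubs, mem_sdiff, mem_union, mem_filter, mem_univ, true_and] at hx ⊢
        exact (hdeg x).eq_or_lt.imp (fun h => ⟨h.symm, hx⟩) id
    _ ≤ _ := card_union_le _ _

lemma coreLeaves_subset (U : Finset V) : F.coreLeaves U ⊆ U := fun x hx => by
  simp only [coreLeaves, leaves, mem_filter, mem_univ, true_and] at hx
  obtain ⟨ed, hed, hxed⟩ := deg_pos_iff.1 (hx.1 ▸ Nat.one_pos)
  exact hx.2 ed hed hxed hxed

lemma card_leaves_le (hleaf : ∀ ed ∈ F.edges, #(ed.filter fun x => deg F x = 1) ≤ 1)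
    (U : Finset V) : #F.leaves ≤ #(F.edges \ edgesIn F U) + #(F.coreLeaves U) :=
  calc #F.leaves
      ≤ #((F.edges \ edgesIn F U).biUnion (·.filter fun x => deg F x = 1) ∪ F.coreLeaves U) :=
        card_le_card fun x hx => by
          by_cases hcore : x ∈ F.coreLeaves U
          · exact mem_union_right _ hcore
          · have hx1 : deg F x = 1 := (mem_filter.1 hx).2
            simp only [coreLeaves, mem_filter, hx, true_and, not_forall] at hcore
            obtain ⟨ed, hed, hxed, hedU⟩ := hcore
            have hout : ed ∈ F.edges \ edgesIn F U :=
              mem_sdiff.2 ⟨hed, fun h => hedU (mem_edgesIn.1 h).2⟩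
            exact mem_union_left _ (mem_biUnion.2 ⟨ed, hout, mem_filter.2 ⟨hxed, hx1⟩⟩)
    _ ≤ ∑ ed ∈ F.edges \ edgesIn F U, #(ed.filter fun x => deg F x = 1) + #(F.coreLeaves U) :=
        (card_union_le _ _).trans (Nat.add_le_add_right card_biUnion_le _)
    _ ≤ #(F.edges \ edgesIn F U) + #(F.coreLeaves U) := by
        gcongr
        simpa using sum_le_card_nsmul _ _ 1 fun ed hed => hleaf ed (mem_sdiff.1 hed).1

theorem card_add_mul_card_univ_sdiff_sub_le_min
    (hleaf : ∀ ed ∈ F.edges, #(ed.filter fun x => deg F x = 1) ≤ 1)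
    (hdeg : ∀ x, 1 ≤ deg F x)
    {k : ℕ} (hk : defic F univ = k) (hhubs : 4 * #F.hubs + 4 * k ≤ #F.edges)
    {U : Finset V} (hΔ : defic F univ ≤ defic F U) {t e : ℕ} (ht : 2 ≤ t)
    (he : 2 * #F.edges ≤ e)
    (hte : #(edgesIn F U) + t * #(F.edges \ edgesIn F U) < e + #(F.edges \ edgesIn F U)) :
    (#U + t * #(univ \ U) : ℤ) - e - k ≤
      min ((#(edgesIn F U) + t * #(F.edges \ edgesIn F U) : ℤ) - e)
        (t * #(F.leaves \ U) + #(F.coreLeaves U)) := by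
  set m := #(F.edges \ edgesIn F U)
  set σ := defic F U - k
  have hE : (#(edgesIn F U) + m : ℤ) = #F.edges := mod_cast card_edgesIn_add_card_sdiff U
  have hUc : (#(univ \ U) : ℤ) = m - σ := by
    have hV := F.card_eq_card_edges_add_defic
    rw [hk] at hV
    rw [card_univ_sdiff, Nat.cast_sub (card_le_univ U)]
    simp only [σ, defic]
    linarith
  have hcompl : (#(univ \ U) : ℤ) ≤ #(F.leaves \ U) + #F.hubs :=
    mod_cast card_univ_sdiff_le hdeg U
  have hleaves : (#F.leaves + #F.hubs : ℤ) = #F.edges + k := by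
    rw [← hk, ← card_eq_card_edges_add_defic]
    exact_mod_cast card_leaves_add_card_hubs hdeg
  have hcore : (#F.leaves : ℤ) ≤ m + #(F.coreLeaves U) := mod_cast card_leaves_le hleaf U
  have hσ : 0 ≤ σ := by simp only [σ]; linarith
  have ht' : (2 : ℤ) ≤ t := mod_cast ht
  have htUc : (t : ℤ) * #(univ \ U) = t * m - t * σ := by rw [hUc]; ring
  have hU : (#U : ℤ) = #(edgesIn F U) + k + σ := by simp only [σ, defic]; ring
  have hp : (0 : ℤ) ≤ #(F.leaves \ U) := Nat.cast_nonneg _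
  -- The left side is `s - (t - 1) σ`, where `s < m` is the surplus of edges. With at least `σ`
  -- hubs, the hub bound provides enough core leaves; with fewer, `m < #(F.leaves \ U) + 2 σ`,
  -- which the leaves of `t ≥ 3` petals cover, while for `t = 2` there is no surplus.
  refine le_min (by linarith [mul_le_mul_of_nonneg_right ht' hσ]) ?_
  rcases le_or_gt σ #F.hubs with hσc | hσc
  · linarith [mul_le_mul_of_nonneg_right ht' hp, mul_le_mul_of_nonneg_right ht' hσ]
  · rcases ht.eq_or_lt with rfl | ht3
    · have : (2 * #F.edges : ℤ) ≤ e := mod_cast he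
      push_cast at *
      linarith
    · have ht3' : (3 : ℤ) ≤ t := mod_cast ht3
      linarith [mul_le_mul_of_nonneg_right ht3' hp, mul_le_mul_of_nonneg_right ht3' hσ]

end Hypergraph3

section Sunflower

open Hypergraph3

variable {ι W : Type*}

/-- The petals of a sunflower with core `U`: the one condition says that each `φ i` is injective
and that distinct petals meet exactly in the common image of `U`. -/
def IsSunflower (U : Finset V) (φ : ι → V → W) : Prop :=
  ∀ i j x y, φ i x = φ j y ↔ i = j ∧ x = y ∨ x = y ∧ x ∈ U

namespace IsSunflower

variable {U : Finset V} {φ : ι → V → W}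

omit [DecidableEq V] [Fintype V] in
lemma of_injective (hinj : ∀ i, Function.Injective (φ i))
    (hglue : ∀ i j, i ≠ j → ∀ x y, φ i x = φ j y ↔ x = y ∧ x ∈ U) :
    IsSunflower U φ := by
  intro i j x y
  by_cases hij : i = j
  · subst hij
    exact ⟨fun h => .inl ⟨rfl, hinj i h⟩, by rintro (⟨-, rfl⟩ | ⟨rfl, -⟩) <;> rfl⟩
  · simp [hglue i j hij, hij]

omit [DecidableEq V] [Fintype V] in
lemma eq_of_apply_eq (hφ : IsSunflower U φ) {i j : ι} {x y : V} (h : φ i x = φ j y) : x = y :=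
  ((hφ i j x y).1 h).elim And.right And.left

omit [DecidableEq V] [Fintype V] in
lemma injective (hφ : IsSunflower U φ) (i : ι) : Function.Injective (φ i) :=
  fun _ _ h => hφ.eq_of_apply_eq h

omit [DecidableEq V] [Fintype V] in
lemma mem_of_apply_eq (hφ : IsSunflower U φ) {i j : ι} {x y : V} (h : φ i x = φ j y)
    (hij : i ≠ j) : x ∈ U :=
  ((hφ i j x y).1 h).elim (fun h' => absurd h'.1 hij) And.right

omit [DecidableEq V] [Fintype V] in
lemma apply_eq_apply (hφ : IsSunflower U φ) (i j : ι) {x : V} (hx : x ∈ U) : φ i x = φ j x :=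
  (hφ i j x x).2 (.inr ⟨rfl, hx⟩)

end IsSunflower

variable [DecidableEq W]

def petalVerts (φ : ι → V → W) (T : Finset ι) : Finset W :=
  T.biUnion fun i => univ.image (φ i)

def Hypergraph3.petalEdges (F : Hypergraph3 V) (φ : ι → V → W) (T : Finset ι) :
    Finset (Finset W) :=
  T.biUnion fun i => F.edges.image (image (φ i))

/-- Vertices of the sub-sunflower on `T` lying in a single one of its edges: the images of the
leaves outside the core in every petal, and those of the core leaves (the same in all petals). -/
def Hypergraph3.leafImages (F : Hypergraph3 V) (U : Finset V) (φ : ι → V → W)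
    (T : Finset ι) (i : ι) : Finset W :=
  T.biUnion (fun j => (F.leaves \ U).image (φ j)) ∪ (F.coreLeaves U).image (φ i)

lemma Hypergraph3.leafImages_subset_petalVerts {F : Hypergraph3 V} {U : Finset V}
    {φ : ι → V → W} {T : Finset ι} {i : ι} (hi : i ∈ T) :
    F.leafImages U φ T i ⊆ petalVerts φ T := by
  intro w hw
  simp only [leafImages, mem_union, mem_biUnion, mem_image] at hw
  simp only [petalVerts, mem_biUnion, mem_image, mem_univ, true_and]
  rcases hw with ⟨j, hj, x, -, rfl⟩ | ⟨x, -, rfl⟩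
  exacts [⟨j, hj, x, rfl⟩, ⟨i, hi, x, rfl⟩]

namespace IsSunflower

variable {U : Finset V} {φ : ι → V → W}

omit [DecidableEq V] [Fintype V] in
lemma image_eq_image (hφ : IsSunflower U φ) (i j : ι) {c : Finset V} (hc : c ⊆ U) :
    c.image (φ i) = c.image (φ j) :=
  image_congr fun _ hx => hφ.apply_eq_apply i j (hc hx)

omit [DecidableEq V] [Fintype V] in
lemma apply_mem_image_iff (hφ : IsSunflower U φ) {i j : ι} {x : V} {c : Finset V} :
    φ i x ∈ c.image (φ j) ↔ x ∈ c ∧ (j = i ∨ x ∈ U) := by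
  constructor
  · intro h
    obtain ⟨y, hy, hyx⟩ := mem_image.1 h
    rcases (hφ j i y x).1 hyx with ⟨rfl, rfl⟩ | ⟨rfl, hyU⟩
    exacts [⟨hy, .inl rfl⟩, ⟨hy, .inr hyU⟩]
  · rintro ⟨hx, rfl | hxU⟩
    exacts [mem_image_of_mem _ hx, mem_image.2 ⟨x, hx, hφ.apply_eq_apply j i hxU⟩]

omit [DecidableEq V] [Fintype V] in
lemma subset_of_image_eq_image (hφ : IsSunflower U φ) {i j : ι} {c d : Finset V}
    (h : c.image (φ i) = d.image (φ j)) (hij : i = j → c ⊆ U) : d ⊆ U := fun y hy => by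
  have hyc : φ j y ∈ c.image (φ i) := h ▸ mem_image_of_mem (φ j) hy
  obtain ⟨x, hx, hxy⟩ := mem_image.1 hyc
  rw [← hφ.eq_of_apply_eq hxy]
  by_cases hij' : i = j
  · exact hij hij' hx
  · exact hφ.mem_of_apply_eq hxy hij'

variable {F : Hypergraph3 V}

omit [Fintype V] in
lemma card_petalEdges (hφ : IsSunflower U φ) {T : Finset ι} (hT : T.Nonempty) :
    #(F.petalEdges φ T) = #(edgesIn F U) + #T * #(F.edges \ edgesIn F U) := by
  obtain ⟨i, hi⟩ := hT
  have hunion : F.petalEdges φ T = (edgesIn F U).image (image (φ i)) ∪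
      T.biUnion fun j => (F.edges \ edgesIn F U).image (image (φ j)) := by
    ext ed
    simp only [petalEdges, mem_union, mem_biUnion, mem_image]
    constructor
    · rintro ⟨j, hj, c, hc, rfl⟩
      by_cases hcU : c ⊆ U
      · exact .inl ⟨c, mem_edgesIn.2 ⟨hc, hcU⟩, hφ.image_eq_image i j hcU⟩
      · exact .inr ⟨j, hj, c, mem_sdiff.2 ⟨hc, fun h => hcU (mem_edgesIn.1 h).2⟩, rfl⟩
    · rintro (⟨c, hc, rfl⟩ | ⟨j, hj, c, hc, rfl⟩)
      exacts [⟨i, hi, c, (mem_edgesIn.1 hc).1, rfl⟩, ⟨j, hj, c, (mem_sdiff.1 hc).1, rfl⟩]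
  have hnoncore {j j' : ι} {c d : Finset V} (h : c.image (φ j) = d.image (φ j'))
      (hd : d ∈ F.edges \ edgesIn F U) (hij : j = j' → c ⊆ U) : False :=
    (mem_sdiff.1 hd).2 (mem_edgesIn.2 ⟨(mem_sdiff.1 hd).1,
      hφ.subset_of_image_eq_image h hij⟩)
  have hcard (j : ι) {E : Finset (Finset V)} : #(E.image (image (φ j))) = #E :=
    card_image_of_injective _ (image_injective (hφ.injective j))
  rw [hunion, card_union_of_disjoint, hcard, card_biUnion, sum_congr rfl fun j _ => hcard j,
    sum_const, smul_eq_mul]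
  · intro j _ j' _ hjj'
    simp only [Function.onFun, disjoint_left, mem_image]
    rintro _ ⟨c, hc, rfl⟩ ⟨d, hd, h⟩
    exact hnoncore h hc fun h' => absurd h'.symm hjj'
  · simp only [disjoint_left, mem_image, mem_biUnion]
    rintro _ ⟨c, hc, rfl⟩ ⟨j, -, d, hd, h⟩
    exact hnoncore h.symm hd fun _ => (mem_edgesIn.1 hc).2

omit [Fintype V] in
lemma card_petalEdges_le (hφ : IsSunflower U φ) (T : Finset ι) :
    #(F.petalEdges φ T) ≤ #(edgesIn F U) + #T * #(F.edges \ edgesIn F U) := by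
  rcases T.eq_empty_or_nonempty with rfl | hT
  · simp [petalEdges]
  · exact (hφ.card_petalEdges hT).le

lemma card_petalVerts_le (hφ : IsSunflower U φ) {T : Finset ι} (hT : T.Nonempty) :
    #(petalVerts φ T) ≤ #U + #T * #(univ \ U) := by
  obtain ⟨i, hi⟩ := hT
  calc #(petalVerts φ T) ≤ #(U.image (φ i) ∪ T.biUnion fun j => (univ \ U).image (φ j)) :=
        card_le_card fun w hw => by
          obtain ⟨j, hj, x, -, rfl⟩ : ∃ j ∈ T, ∃ x ∈ univ, φ j x = w := by
            simpa [petalVerts] using hw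
          by_cases hx : x ∈ U
          · exact mem_union_left _ (mem_image.2 ⟨x, hx, hφ.apply_eq_apply i j hx⟩)
          · refine mem_union_right _ (mem_biUnion.2 ⟨j, hj, mem_image_of_mem _ ?_⟩)
            simpa using hx
    _ ≤ #U + ∑ j ∈ T, #((univ \ U).image (φ j)) :=
        (card_union_le _ _).trans (add_le_add card_image_le card_biUnion_le)
    _ ≤ #U + #T * #(univ \ U) := by
        gcongr
        simpa using sum_le_card_nsmul T _ _ fun j _ => card_image_le

lemma card_leafImages (hφ : IsSunflower U φ) (T : Finset ι) (i : ι) :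
    #(F.leafImages U φ T i) = #T * #(F.leaves \ U) + #(F.coreLeaves U) := by
  rw [leafImages, card_union_of_disjoint, card_biUnion,
    sum_congr rfl fun j _ => card_image_of_injective _ (hφ.injective j), sum_const, smul_eq_mul,
    card_image_of_injective _ (hφ.injective i)]
  · intro j _ j' _ hjj'
    simp only [Function.onFun, disjoint_left, mem_image]
    rintro _ ⟨x, hx, rfl⟩ ⟨y, hy, h⟩
    exact (mem_sdiff.1 hy).2 (hφ.mem_of_apply_eq h fun h' => hjj' h'.symm)
  · simp only [disjoint_left, mem_biUnion, mem_image]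
    rintro _ ⟨j, -, x, hx, rfl⟩ ⟨y, hy, h⟩
    exact (mem_sdiff.1 hx).2 (hφ.eq_of_apply_eq h ▸ coreLeaves_subset U hy)

omit [Fintype V] in
lemma image_eq_image_of_apply_mem (hφ : IsSunflower U φ) {a : V} (ha : deg F a = 1)
    (haU : a ∈ U → ∀ ed ∈ F.edges, a ∈ ed → ed ⊆ U) {i j j' : ι} {c d : Finset V}
    (hc : c ∈ F.edges) (hd : d ∈ F.edges) (hac : φ i a ∈ c.image (φ j))
    (had : φ i a ∈ d.image (φ j')) : c.image (φ j) = d.image (φ j') := by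
  rw [hφ.apply_mem_image_iff] at hac had
  obtain rfl := eq_of_deg_eq_one ha hc hd hac.1 had.1
  by_cases hau : a ∈ U
  · exact hφ.image_eq_image j j' (haU hau c hc hac.1)
  · rw [hac.2.resolve_right hau, had.2.resolve_right hau]

lemma card_filter_mem_petalEdges_le_one (hφ : IsSunflower U φ) {T : Finset ι} {i : ι} {w : W}
    (hw : w ∈ F.leafImages U φ T i) : #((F.petalEdges φ T).filter (w ∈ ·)) ≤ 1 := by
  obtain ⟨j, a, ha, haU, rfl⟩ : ∃ j a, deg F a = 1 ∧
      (a ∈ U → ∀ ed ∈ F.edges, a ∈ ed → ed ⊆ U) ∧ φ j a = w := by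
    simp only [leafImages, mem_union, mem_biUnion, mem_image] at hw
    rcases hw with ⟨j, -, a, ha, rfl⟩ | ⟨a, ha, rfl⟩
    · simp only [leaves, mem_sdiff, mem_filter, mem_univ, true_and] at ha
      exact ⟨j, a, ha.1, fun h => absurd h ha.2, rfl⟩
    · simp only [coreLeaves, leaves, mem_filter, mem_univ, true_and] at ha
      exact ⟨i, a, ha.1, fun _ => ha.2, rfl⟩
  refine card_le_one.2 fun ed₁ h₁ ed₂ h₂ => ?_
  simp only [petalEdges, mem_filter, mem_biUnion, mem_image] at h₁ h₂
  obtain ⟨⟨j₁, -, c₁, hc₁, rfl⟩, ha₁⟩ := h₁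
  obtain ⟨⟨j₂, -, c₂, hc₂, rfl⟩, ha₂⟩ := h₂
  exact hφ.image_eq_image_of_apply_mem ha haU hc₁ hc₂ ha₁ ha₂

lemma card_petalEdges_le_card_edgesIn_add {H : Hypergraph3 W} (hφ : IsSunflower U φ)
    (hmap : ∀ i, ∀ ed ∈ F.edges, ed.image (φ i) ∈ H.edges) {T : Finset ι} {i : ι}
    {X : Finset W} (hX : X ⊆ F.leafImages U φ T i) :
    #(F.petalEdges φ T) ≤ #(edgesIn H (petalVerts φ T \ X)) + #X := by
  refine (card_le_card_filter_disjoint_add fun w hw =>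
    hφ.card_filter_mem_petalEdges_le_one (hX hw)).trans (Nat.add_le_add_right (card_le_card ?_) _)
  intro ed hed
  simp only [petalEdges, mem_filter, mem_biUnion, mem_image] at hed
  obtain ⟨⟨j, hj, c, hc, rfl⟩, hdisj⟩ := hed
  refine mem_filter.2 ⟨hmap j c hc, fun w hw => mem_sdiff.2 ⟨?_, disjoint_left.1 hdisj hw⟩⟩
  obtain ⟨x, -, rfl⟩ := mem_image.1 hw
  exact mem_biUnion.2 ⟨j, hj, mem_image_of_mem _ (mem_univ x)⟩

theorem exists_configuration {H : Hypergraph3 W} (hφ : IsSunflower U φ)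
    (hmap : ∀ i, ∀ ed ∈ F.edges, ed.image (φ i) ∈ H.edges)
    (hleaf : ∀ ed ∈ F.edges, #(ed.filter fun x => deg F x = 1) ≤ 1)
    (hdeg : ∀ x, 1 ≤ deg F x)
    {k : ℕ} (hk : defic F univ = k) (hhubs : 4 * #F.hubs + 4 * k ≤ #F.edges)
    (hΔ : defic F univ ≤ defic F U) {T : Finset ι} {e : ℕ} (hT : 2 ≤ #T)
    (he : 2 * #F.edges ≤ e) (het : e ≤ #(edgesIn F U) + #T * #(F.edges \ edgesIn F U))
    (hte : #(edgesIn F U) + #T * #(F.edges \ edgesIn F U) < e + #(F.edges \ edgesIn F U)) :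
    ∃ S : Finset W, (#S : ℤ) ≤ e + k ∧ e ≤ #(edgesIn H S) := by
  obtain ⟨i, hi⟩ : T.Nonempty := card_pos.1 (by omega)
  obtain ⟨X, hX, hXcard⟩ := exists_subset_card_eq (min_le_right
    (#(edgesIn F U) + #T * #(F.edges \ edgesIn F U) - e) #(F.leafImages U φ T i))
  refine ⟨petalVerts φ T \ X, ?_, ?_⟩
  · have hbudget :=
      card_add_mul_card_univ_sdiff_sub_le_min hleaf hdeg hk hhubs hΔ hT he hte
    have hverts := hφ.card_petalVerts_le ⟨i, hi⟩
    rw [card_sdiff_of_subset (hX.trans (leafImages_subset_petalVerts hi)), hXcard,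
      hφ.card_leafImages]
    omega
  · have hedges := hφ.card_petalEdges_le_card_edgesIn_add hmap hX
    rw [hφ.card_petalEdges ⟨i, hi⟩, hXcard] at hedges
    omega

end IsSunflower

end Sunflower

theorem sunflower_to_configuration_general {W : Type*} [DecidableEq W]
    (F : Hypergraph3 V) (H : Hypergraph3 W) (e : ℕ)
    (heF : Eligible F) (he : 2 * F.edges.card ≤ e)
    (hsun : ∃ (r : ℕ) (U : Finset V) (φ : Fin r → V → W),
      U ⊂ Finset.univ ∧ defic F Finset.univ ≤ defic F U ∧
      (∀ i, Function.Injective (φ i)) ∧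
      (∀ i, ∀ ed ∈ F.edges, ed.image (φ i) ∈ H.edges) ∧
      (∀ i j : Fin r, i ≠ j → ∀ x y : V, φ i x = φ j y ↔ (x = y ∧ x ∈ U)) ∧
      (e : ℤ) ≤ ((Finset.univ.biUnion
        (fun i : Fin r => F.edges.image (Finset.image (φ i)))).card : ℤ)) :
    ∃ S : Finset W, (S.card : ℤ) ≤ (e : ℤ) + defic F Finset.univ ∧
      e ≤ (edgesIn H S).card := by
  obtain ⟨-, -, -, -, k, -, hk, -, -, -, -, -, -, -, -, hhubs, hleaf, hdeg, -⟩ := heF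
  obtain ⟨r, U, φ, hU, hΔ, hinj, hmap, hglue, hbig⟩ := hsun
  have hφ := IsSunflower.of_injective hinj hglue
  have hm := card_pos.2 (Hypergraph3.sdiff_edgesIn_nonempty hdeg hU)
  have hE := Hypergraph3.card_edgesIn_add_card_sdiff (F := F) U
  have hr : e ≤ #(edgesIn F U) + r * #(F.edges \ edgesIn F U) := by
    have hsize : e ≤ #(F.petalEdges φ univ) := mod_cast hbig
    simpa using hsize.trans (hφ.card_petalEdges_le univ)
  obtain ⟨t, ht, htr, het, hte⟩ := exists_le_add_mul_lt_add (by omega) hr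
  obtain ⟨T, -, rfl⟩ := exists_subset_card_eq (show t ≤ #(univ : Finset (Fin r)) by simpa)
  have hhubs' : 4 * #F.hubs + 4 * k ≤ #F.edges := by
    have : (4 * #F.hubs + 4 * k : ℚ) ≤ #F.edges := by unfold Hypergraph3.hubs; linarith
    exact_mod_cast this
  rw [hk]
  exact hφ.exists_configuration hmap hleaf hdeg hk hhubs' hΔ ht he het hte

/-- if `F` is eligible, `e ≥ 2e(F)`, and the 3-uniform hypergraph `H` contains
an `(r, F)`-sunflower (for some `r`) with at least `e` edges, then `H` contains a set of at
most `e + Δ(F)` vertices spanning at least `e` edges. -/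
theorem sunflower_to_configuration {W : Type*} [DecidableEq W] [Fintype W]
    (F : Hypergraph3 V) (H : Hypergraph3 W) (e : ℕ)
    (heF : Eligible F) (he : 2 * F.edges.card ≤ e)
    (hsun : ∃ (r : ℕ) (U : Finset V) (φ : Fin r → V → W),
      U ⊂ Finset.univ ∧ defic F Finset.univ ≤ defic F U ∧
      (∀ i, Function.Injective (φ i)) ∧
      (∀ i, ∀ ed ∈ F.edges, ed.image (φ i) ∈ H.edges) ∧
      (∀ i j : Fin r, i ≠ j → ∀ x y : V, φ i x = φ j y ↔ (x = y ∧ x ∈ U)) ∧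
      (e : ℤ) ≤ ((Finset.univ.biUnion
        (fun i : Fin r => F.edges.image (Finset.image (φ i)))).card : ℤ)) :
    ∃ S : Finset W, (S.card : ℤ) ≤ (e : ℤ) + defic F Finset.univ ∧
      e ≤ (edgesIn H S).card :=
  sunflower_to_configuration_general F H e heF he hsun
end

section
/- Let G be a properly edge-colored complete bipartite graph K_{s,t'} with t' > (s(s−1)+1)(t−1). Then G contains a rainbow copy of K_{s,t}, i.e., a copy of K_{s,t} in which all st edges receive distinct colors. -/
/-!
Greedy choice of the right vertices. If the right vertices chosen so far span a rainbow
`K_{s,k}`, a new vertex `j` can only spoil it by an edge `(i, j)` repeating the colour of an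
edge `(i', y)` with `i ≠ i'` and `y` already chosen (repetitions with `i = i'` or `y = j` are
excluded by properness). Since each row is injective, each triple `(i, i', y)` blocks at most
one `j`, so at most `(s(s-1)+1) k` vertices are blocked or already chosen, and the choice
can continue while `k ≤ t - 1`, since `t' > (s(s-1)+1)(t-1)`.
-/

open Finset Function

section Rainbow

variable {ι α C : Type*}

def IsRainbowOn (c : ι → α → C) (S : Set α) : Prop :=
  Set.InjOn (fun p : ι × α => c p.1 p.2) (Set.univ ×ˢ S)

variable [Fintype ι] [Fintype α] [DecidableEq α] [DecidableEq C]

def blockedBy (c : ι → α → C) (S : Finset α) : Finset α :=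
  S ∪ ((univ : Finset ι).offDiag ×ˢ S).biUnion
    fun q => {j | c q.1.1 j = c q.1.2 q.2}

theorem card_blockedBy_le {c : ι → α → C} (hrow : ∀ i, Injective (c i)) (S : Finset α) :
    #(blockedBy c S) ≤ (Fintype.card ι * (Fintype.card ι - 1) + 1) * #S := by
  have hclash : #(((univ : Finset ι).offDiag ×ˢ S).biUnion
      fun q => ({j | c q.1.1 j = c q.1.2 q.2} : Finset α)) ≤
      Fintype.card ι * (Fintype.card ι - 1) * #S := by
    refine (card_biUnion_le_card_mul _ _ 1 fun q _ => card_le_one.mpr ?_).trans ?_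
    · intro a ha b hb
      simp only [mem_filter, mem_univ, true_and] at ha hb
      exact hrow q.1.1 (ha.trans hb.symm)
    · rw [card_product, offDiag_card, card_univ, Nat.mul_sub_one, mul_one]
  calc #(blockedBy c S)
      ≤ #S + Fintype.card ι * (Fintype.card ι - 1) * #S :=
        (card_union_le _ _).trans (Nat.add_le_add_left hclash _)
    _ = (Fintype.card ι * (Fintype.card ι - 1) + 1) * #S := by ring

theorem IsRainbowOn.insert {c : ι → α → C} (hrow : ∀ i, Injective (c i))
    (hcol : ∀ j, Injective fun i => c i j) {S : Finset α} (hS : IsRainbowOn c S) {j : α}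
    (hj : j ∉ blockedBy c S) : IsRainbowOn c (insert j S : Finset α) := by
  have hjS : j ∉ S := fun h => hj (mem_union_left _ h)
  have hfresh : ∀ i i', ∀ y ∈ S, c i j ≠ c i' y := by
    intro i i' y hy heq
    obtain rfl | hii := eq_or_ne i i'
    · exact hjS (hrow i heq ▸ hy)
    · refine hj (mem_union_right _ (mem_biUnion.mpr ⟨((i, i'), y), ?_, ?_⟩))
      · simp [hii, hy]
      · simp [heq]
  rintro ⟨i, x⟩ ⟨-, hx⟩ ⟨i', y⟩ ⟨-, hy⟩ (hxy : c i x = c i' y)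
  simp only [coe_insert, Set.mem_insert_iff, mem_coe] at hx hy
  rcases hx with rfl | hx <;> rcases hy with rfl | hy
  · rw [hcol _ hxy]
  · exact absurd hxy (hfresh i i' y hy)
  · exact absurd hxy.symm (hfresh i' i x hx)
  · exact hS ⟨trivial, hx⟩ ⟨trivial, hy⟩ hxy

theorem exists_isRainbowOn_card {c : ι → α → C} (hrow : ∀ i, Injective (c i))
    (hcol : ∀ j, Injective fun i => c i j) (k : ℕ)
    (hk : (Fintype.card ι * (Fintype.card ι - 1) + 1) * (k - 1) < Fintype.card α) :
    ∃ S : Finset α, #S = k ∧ IsRainbowOn c S := by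
  induction k with
  | zero => exact ⟨∅, card_empty, by simp [IsRainbowOn]⟩
  | succ k ih =>
    obtain ⟨S, hSk, hS⟩ := ih <| lt_of_le_of_lt (Nat.mul_le_mul_left _ (by omega)) hk
    have hlt : #(blockedBy c S) < #(univ : Finset α) := by
      rw [card_univ]
      exact (card_blockedBy_le hrow S).trans_lt (by simpa [hSk] using hk)
    obtain ⟨j, -, hj⟩ := exists_mem_notMem_of_card_lt_card hlt
    have hjS : j ∉ S := fun h => hj (mem_union_left _ h)
    exact ⟨insert j S, by rw [card_insert_of_notMem hjS, hSk], hS.insert hrow hcol hj⟩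

end Rainbow

/-- Keevash–Mubayi–Sudakov–Verstraëte: a properly edge-colored `K_{s,t'}` with
`t' > (s(s-1)+1)(t-1)` contains a rainbow copy of `K_{s,t}`. Here `c i j` is the color of the
edge between left vertex `i` and right vertex `j`; properness says edges sharing a vertex get
distinct colors, and a rainbow copy is given by an injective choice `g` of `t` right vertices
such that all `st` colors `c i (g j)` are pairwise distinct. -/
theorem rainbow_Kst {C : Type*} (s t t' : ℕ) (ht' : (s * (s - 1) + 1) * (t - 1) < t')
    (c : Fin s → Fin t' → C)
    (hproper₁ : ∀ i : Fin s, Function.Injective (c i))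
    (hproper₂ : ∀ j : Fin t', Function.Injective (fun i : Fin s => c i j)) :
    ∃ g : Fin t → Fin t', Function.Injective g ∧
      Function.Injective (fun p : Fin s × Fin t => c p.1 (g p.2)) := by
  classical
  obtain ⟨S, hSt, hS⟩ :=
    exists_isRainbowOn_card hproper₁ hproper₂ t (by simpa only [Fintype.card_fin] using ht')
  let g := S.orderEmbOfFin hSt
  refine ⟨g, g.injective, fun p q hpq => ?_⟩
  have hmem : ∀ p : Fin s × Fin t, (p.1, g p.2) ∈ Set.univ ×ˢ (S : Set (Fin t')) :=
    fun p => ⟨trivial, S.orderEmbOfFin_mem hSt p.2⟩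
  have h := hS (hmem p) (hmem q) hpq
  exact Prod.ext (Prod.ext_iff.mp h).1 (g.injective (Prod.ext_iff.mp h).2)
end
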